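/- arXiv:1602.02341 — 3 statements merged into one kernel-verified Lean document; each statement's English description precedes it below -/
import Mathlib

section
/- Let u : ℝⁿ → ℝ be bounded and continuous, ε > 0, u^ε its sup-envelope, and x̄ a point. Suppose x̄* realizes u^ε(x̄) = u(x̄*) - |x̄* - x̄|²/ε. If P is a C^{1,1} function touching u^ε from above at x̄, then the translated function P̃(x) = P(x - (x̄* - x̄)) + |x̄* - x̄|²/ε touches u from above at x̄*. -/
theorem translated_test_function_touches_u (n : ℕ)
    (u : EuclideanSpace ℝ (Fin n) → ℝ) (ε : ℝ)
    (hu : Continuous u) (hbdd : ∃ M, ∀ x, |u x| ≤ M) (hε : 0 < ε)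
    (uε : EuclideanSpace ℝ (Fin n) → ℝ)
    (huε : ∀ x, uε x = ⨆ y, (u y - ‖y - x‖ ^ 2 / ε))
    (xbar xbars : EuclideanSpace ℝ (Fin n))
    (hxs : uε xbar = u xbars - ‖xbars - xbar‖ ^ 2 / ε)
    (P : EuclideanSpace ℝ (Fin n) → ℝ)
    (hPtouch : (∀ z, uε z ≤ P z) ∧ P xbar = uε xbar)
    (Pt : EuclideanSpace ℝ (Fin n) → ℝ)
    (hPt : ∀ x, Pt x = P (x - (xbars - xbar)) + ‖xbars - xbar‖ ^ 2 / ε) :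
    (∀ x, u x ≤ Pt x) ∧ Pt xbars = u xbars := by
  obtain ⟨M, hM⟩ := hbdd
  have key : ∀ x z : EuclideanSpace ℝ (Fin n), u x - ‖x - z‖ ^ 2 / ε ≤ uε z := by
    intro x z
    rw [huε z]
    refine le_ciSup (f := fun y => u y - ‖y - z‖ ^ 2 / ε) ⟨M, ?_⟩ x
    rintro r ⟨y, rfl⟩
    have := (abs_le.mp (hM y)).2
    have h2 : 0 ≤ ‖y - z‖ ^ 2 / ε := by positivity
    linarith
  constructor
  · intro x
    have h1 := key x (x - (xbars - xbar))
    have h2 := hPtouch.1 (x - (xbars - xbar))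
    rw [hPt x]
    have : x - (x - (xbars - xbar)) = xbars - xbar := by abel
    rw [this] at h1
    linarith
  · rw [hPt xbars]
    have : xbars - (xbars - xbar) = xbar := by abel
    rw [this, hPtouch.2, hxs]
    ring
end

section
/- Let u, v, φ : ℝⁿ → ℝ be bounded continuous, ε > 0. Set U = u - φ, V = v - φ, let U^ε be the sup-envelope of U and V_ε the inf-envelope of V. If x̄ is a maximum point of U^ε - V_ε, and x̄*, x̄_* realize the sup and inf defining U^ε(x̄) and V_ε(x̄) respectively, then for every y ∈ ℝⁿ, δu(x̄*, y) ≤ δv(x̄_*, y) - δφ(x̄_*, y) + δφ(x̄*, y), where δw(x,y) = w(x+y) + w(x-y) - 2w(x). -/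
/-- Second-order symmetric difference. -/
noncomputable def sd {n : ℕ} (w : EuclideanSpace ℝ (Fin n) → ℝ)
    (x y : EuclideanSpace ℝ (Fin n)) : ℝ :=
  w (x + y) + w (x - y) - 2 * w x

theorem symmetric_difference_inequality_at_max (n : ℕ)
    (u v φ : EuclideanSpace ℝ (Fin n) → ℝ) (ε : ℝ) (hε : 0 < ε)
    (hu : Continuous u) (hv : Continuous v) (hφ : Continuous φ)
    (hub : ∃ M, ∀ x, |u x| ≤ M) (hvb : ∃ M, ∀ x, |v x| ≤ M)
    (hφb : ∃ M, ∀ x, |φ x| ≤ M)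
    (U V Uε Vε : EuclideanSpace ℝ (Fin n) → ℝ)
    (hU : ∀ x, U x = u x - φ x) (hV : ∀ x, V x = v x - φ x)
    (hUε : ∀ x, Uε x = ⨆ y, (U y - ‖y - x‖ ^ 2 / ε))
    (hVε : ∀ x, Vε x = ⨅ y, (V y + ‖y - x‖ ^ 2 / ε))
    (xbar xbars xbarls : EuclideanSpace ℝ (Fin n))
    (hmax : ∀ z, Uε z - Vε z ≤ Uε xbar - Vε xbar)
    (hxs : Uε xbar = U xbars - ‖xbars - xbar‖ ^ 2 / ε)
    (hxls : Vε xbar = V xbarls + ‖xbarls - xbar‖ ^ 2 / ε) :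
    ∀ y, sd u xbars y ≤ sd v xbarls y - sd φ xbarls y + sd φ xbars y := by
  intro y
  obtain ⟨Mu, hMu⟩ := hub
  obtain ⟨Mv, hMv⟩ := hvb
  obtain ⟨Mφ, hMφ⟩ := hφb
  have hUb : ∀ z, U z ≤ Mu + Mφ := fun z => by
    rw [hU]; linarith [(abs_le.1 (hMu z)).2, (abs_le.1 (hMφ z)).1]
  have hVb : ∀ z, -(Mv + Mφ) ≤ V z := fun z => by
    rw [hV]; linarith [(abs_le.1 (hMv z)).1, (abs_le.1 (hMφ z)).2]
  have hsq : ∀ (a b : EuclideanSpace ℝ (Fin n)), 0 ≤ ‖a - b‖ ^ 2 / ε := fun a b =>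
    div_nonneg (sq_nonneg _) hε.le
  have hUle : ∀ x z, U z - ‖z - x‖ ^ 2 / ε ≤ Uε x := by
    intro x z
    rw [hUε]
    have hbdd : BddAbove (Set.range fun w => U w - ‖w - x‖ ^ 2 / ε) := by
      refine ⟨Mu + Mφ, ?_⟩
      rintro _ ⟨w, rfl⟩
      have := hUb w; have := hsq w x
      simp only []; linarith
    exact le_ciSup hbdd z
  have hVle : ∀ x z, Vε x ≤ V z + ‖z - x‖ ^ 2 / ε := by
    intro x z
    rw [hVε]
    have hbdd : BddBelow (Set.range fun w => V w + ‖w - x‖ ^ 2 / ε) := by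
      refine ⟨-(Mv + Mφ), ?_⟩
      rintro _ ⟨w, rfl⟩
      have := hVb w; have := hsq w x
      simp only []; linarith
    exact ciInf_le hbdd z
  have e1 : (xbars + y) - (xbar + y) = xbars - xbar := by abel
  have e2 : (xbars - y) - (xbar - y) = xbars - xbar := by abel
  have e3 : (xbarls + y) - (xbar + y) = xbarls - xbar := by abel
  have e4 : (xbarls - y) - (xbar - y) = xbarls - xbar := by abel
  have h1 := hUle (xbar + y) (xbars + y); rw [e1] at h1
  have h2 := hUle (xbar - y) (xbars - y); rw [e2] at h2
  have h3 := hVle (xbar + y) (xbarls + y); rw [e3] at h3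
  have h4 := hVle (xbar - y) (xbarls - y); rw [e4] at h4
  have hm1 := hmax (xbar + y)
  have hm2 := hmax (xbar - y)
  have hu0 := hU xbars; have hu1 := hU (xbars + y); have hu2 := hU (xbars - y)
  have hv0 := hV xbarls; have hv1 := hV (xbarls + y); have hv2 := hV (xbarls - y)
  simp only [sd]
  linarith
end

section
/- Let σ ∈ (1,2), p > 0, and let u₀ : ℝⁿ → ℝ be smooth, positive, bounded by 1, with u₀(x) = |x|^{-p} for |x| ≥ 1 and |D²u₀(x)| ≤ C₀|x|^{-p-2} for |x| ≥ 1. Then there is a constant C such that for all |x| ≥ 2, ∫_{ℝⁿ} |δu₀(x,y)| / |y|^{n+σ} dy ≤ C |x|^{-σ}. -/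
open MeasureTheory

open Set Metric in
/-- Integrability of a radial function from integrability of its 1D profile. -/
lemma integrable_of_radial_profile {E : Type*} [NormedAddCommGroup E] [NormedSpace ℝ E]
    [MeasurableSpace E] [BorelSpace E] [FiniteDimensional ℝ E] [Nontrivial E]
    (μ : Measure E) [μ.IsAddHaarMeasure] {f : ℝ → ℝ} (hf : Measurable f)
    (hint : IntegrableOn (fun r : ℝ => r ^ (Module.finrank ℝ E - 1) * f r) (Set.Ioi 0)) :
    Integrable (fun x : E => f ‖x‖) μ := by
  set d := Module.finrank ℝ E - 1 with hd
  have hmap : Measure.map (Subtype.val) (Measure.comap (Subtype.val : Ioi (0:ℝ) → ℝ) volume)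
      = volume.restrict (Set.Ioi 0) := by
    rw [(MeasurableEmbedding.subtype_coe measurableSet_Ioi).map_comap, Subtype.range_coe]
  have h1 : Integrable ((fun r : ℝ => r ^ d * f r) ∘ (Subtype.val : Ioi (0:ℝ) → ℝ))
      (Measure.comap Subtype.val volume) := by
    rw [← (MeasurableEmbedding.subtype_coe measurableSet_Ioi).integrable_map_iff, hmap]
    exact hint
  have h2 : Integrable (fun r : Ioi (0:ℝ) => f r.1) (Measure.volumeIoiPow d) := by
    rw [Measure.volumeIoiPow,
      integrable_withDensity_iff ((measurable_subtype_coe.pow_const d).ennreal_ofReal)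
        (ae_of_all _ fun r => ENNReal.ofReal_lt_top)]
    refine h1.congr (ae_of_all _ fun r => ?_)
    simp only [Function.comp_apply]
    rw [ENNReal.toReal_ofReal (pow_nonneg (le_of_lt r.2) d)]
    ring
  have h3 : Integrable (fun z : (sphere (0:E) 1) × (Ioi (0:ℝ)) => f z.2.1)
      (μ.toSphere.prod (Measure.volumeIoiPow d)) := by
    have hmeas : AEStronglyMeasurable (fun z : (sphere (0:E) 1) × (Ioi (0:ℝ)) => f z.2.1)
        (μ.toSphere.prod (Measure.volumeIoiPow d)) :=
      (hf.comp (measurable_subtype_coe.comp measurable_snd)).aestronglyMeasurable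
    have hconst : Integrable
        (fun _ : sphere (0:E) 1 => ∫ r : Ioi (0:ℝ), ‖f r.1‖ ∂(Measure.volumeIoiPow d))
        μ.toSphere := integrable_const _
    exact (integrable_prod_iff hmeas).2 ⟨ae_of_all _ fun _ => h2, hconst⟩
  have h4 : Integrable (fun x : ({(0:E)}ᶜ : Set E) => f ‖x.1‖) (Measure.comap Subtype.val μ) :=
    ((μ.measurePreserving_homeomorphUnitSphereProd).integrable_comp_emb
      (Homeomorph.measurableEmbedding _)
      (g := fun z : (sphere (0:E) 1) × (Ioi (0:ℝ)) => f z.2.1)).2 h3 |>.congr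
      (ae_of_all _ fun x => by simp [homeomorphUnitSphereProd_apply_snd_coe])
  have hmap2 : Measure.map Subtype.val
      (Measure.comap (Subtype.val : ({(0:E)}ᶜ : Set E) → E) μ) = μ.restrict {(0:E)}ᶜ := by
    rw [(MeasurableEmbedding.subtype_coe (measurableSet_singleton (0:E)).compl).map_comap,
      Subtype.range_coe]
  rw [← restrict_compl_singleton (μ := μ) (0:E), ← hmap2,
    (MeasurableEmbedding.subtype_coe (measurableSet_singleton (0:E)).compl).integrable_map_iff]
  exact h4

set_option maxHeartbeats 2000000 in
theorem decay_of_kernel_integral_of_power_tail (n : ℕ) (σ p C₀ : ℝ)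
    (hσ : 1 < σ ∧ σ < 2) (hp : 0 < p) (hC₀ : 0 < C₀)
    (u₀ : EuclideanSpace ℝ (Fin n) → ℝ)
    (hsmooth : ContDiff ℝ (⊤ : ℕ∞) u₀)
    (hpos : ∀ x, 0 < u₀ x) (hbd : ∀ x, u₀ x ≤ 1)
    (htail : ∀ x, 1 ≤ ‖x‖ → u₀ x = ‖x‖ ^ (-p))
    (hD2 : ∀ x, 1 ≤ ‖x‖ → ‖iteratedFDeriv ℝ 2 u₀ x‖ ≤ C₀ * ‖x‖ ^ (-p - 2)) :
    ∃ C : ℝ, 0 < C ∧ ∀ x, 2 ≤ ‖x‖ →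
      ∫ y, |sd u₀ x y| / ‖y‖ ^ ((n : ℝ) + σ) ≤ C * ‖x‖ ^ (-σ) := by
  obtain ⟨hσ1, hσ2⟩ := hσ
  have hσ0 : 0 < σ := lt_trans one_pos hσ1
  have h2σ : 0 < 2 - σ := by linarith
  rcases Nat.eq_zero_or_pos n with hn | hn
  · subst hn
    refine ⟨1, one_pos, fun x hx => absurd hx ?_⟩
    have hx0 : x = 0 := Subsingleton.elim x 0
    rw [hx0, norm_zero]
    norm_num
  have hdim : Module.finrank ℝ (EuclideanSpace ℝ (Fin n)) = n := finrank_euclideanSpace_fin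
  haveI : Nontrivial (EuclideanSpace ℝ (Fin n)) :=
    Module.nontrivial_of_finrank_pos (R := ℝ) (by rw [hdim]; exact hn)
  set vol : ℝ := (volume (Metric.ball (0:EuclideanSpace ℝ (Fin n)) 1)).toReal with hvol
  have hvol0 : 0 ≤ vol := ENNReal.toReal_nonneg
  set K : ℝ := n * vol * (2 * C₀ / (2 - σ) + 4 / σ) * 2 ^ σ with hK
  have hK0 : 0 ≤ K := by
    apply mul_nonneg
    apply mul_nonneg (mul_nonneg (Nat.cast_nonneg n) hvol0)
    · positivity
    · positivity
  refine ⟨K + 1, by linarith, fun x hx => ?_⟩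
  -- basic setup
  set R : ℝ := ‖x‖ / 2 with hRdef
  have hR1 : 1 ≤ R := by rw [hRdef]; linarith
  have hR0 : 0 < R := lt_of_lt_of_le one_pos hR1
  set M : ℝ := C₀ * R ^ (-p - 2) with hM
  have hM0 : 0 < M := mul_pos hC₀ (Real.rpow_pos_of_pos hR0 _)
  -- differentiability facts
  have hdiff : Differentiable ℝ u₀ := hsmooth.differentiable (by simp)
  have hfd : Differentiable ℝ (fderiv ℝ u₀) := by
    have hinf : ContDiff ℝ ((⊤:ℕ∞) : WithTop ℕ∞) u₀ := hsmooth.of_le (by simp)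
    exact ((contDiff_infty_iff_fderiv.mp hinf).2).differentiable (by simp)
  -- bound on the second derivative on the ball around x
  have hball : ∀ z ∈ Metric.closedBall x R, ‖fderiv ℝ (fderiv ℝ u₀) z‖ ≤ M := by
    intro z hz
    have hz' : ‖z - x‖ ≤ R := mem_closedBall_iff_norm.mp hz
    have hz2 : R ≤ ‖z‖ := by
      have h1 : ‖x‖ - ‖z‖ ≤ ‖x - z‖ := norm_sub_norm_le x z
      have h2 : ‖x - z‖ = ‖z - x‖ := norm_sub_rev x z
      rw [hRdef] at hz' ⊢
      linarith
    have hz1 : 1 ≤ ‖z‖ := le_trans hR1 hz2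
    have e : ‖fderiv ℝ (fderiv ℝ u₀) z‖ = ‖iteratedFDeriv ℝ 2 u₀ z‖ := by
      calc ‖fderiv ℝ (fderiv ℝ u₀) z‖
          = ‖iteratedFDeriv ℝ 0 (fderiv ℝ (fderiv ℝ u₀)) z‖ := by rw [norm_iteratedFDeriv_zero]
        _ = ‖iteratedFDeriv ℝ 1 (fderiv ℝ u₀) z‖ := norm_iteratedFDeriv_fderiv
        _ = ‖iteratedFDeriv ℝ 2 u₀ z‖ := norm_iteratedFDeriv_fderiv
    rw [e]
    calc ‖iteratedFDeriv ℝ 2 u₀ z‖ ≤ C₀ * ‖z‖ ^ (-p - 2) := hD2 z hz1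
      _ ≤ C₀ * R ^ (-p - 2) := by
          apply mul_le_mul_of_nonneg_left _ hC₀.le
          exact Real.rpow_le_rpow_of_nonpos hR0 hz2 (by linarith)
  -- Lipschitz bound for the gradient on the ball
  have hlip : ∀ z ∈ Metric.closedBall x R, ∀ w ∈ Metric.closedBall x R,
      ‖fderiv ℝ u₀ z - fderiv ℝ u₀ w‖ ≤ M * ‖z - w‖ := fun z hz w hw =>
    (convex_closedBall x R).norm_image_sub_le_of_norm_fderiv_le
      (fun v _ => hfd v) hball hw hz
  -- key pointwise Taylor estimate
  have key : ∀ y : EuclideanSpace ℝ (Fin n), ‖y‖ ≤ R → |sd u₀ x y| ≤ 2 * M * ‖y‖ ^ 2 := by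
    intro y hy
    set φ : ℝ → ℝ := fun t => u₀ (x + t • y) + u₀ (x - t • y) with hφ
    set φ' : ℝ → ℝ := fun t => fderiv ℝ u₀ (x + t • y) y - fderiv ℝ u₀ (x - t • y) y with hφ'
    have hmem : ∀ t ∈ Set.Icc (0:ℝ) 1,
        (x + t • y) ∈ Metric.closedBall x R ∧ (x - t • y) ∈ Metric.closedBall x R := by
      intro t ht
      have hty : ‖t • y‖ ≤ R := by
        rw [norm_smul, Real.norm_eq_abs, abs_of_nonneg ht.1]
        calc t * ‖y‖ ≤ 1 * ‖y‖ := mul_le_mul_of_nonneg_right ht.2 (norm_nonneg y)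
          _ = ‖y‖ := one_mul _
          _ ≤ R := hy
      constructor
      · rw [mem_closedBall_iff_norm, add_sub_cancel_left]; exact hty
      · rw [mem_closedBall_iff_norm, sub_sub_cancel_left, norm_neg]; exact hty
    have hderiv : ∀ t : ℝ, HasDerivAt φ (φ' t) t := by
      intro t
      have h1 : HasDerivAt (fun t : ℝ => x + t • y) y t := by
        simpa using ((hasDerivAt_id t).smul_const y).const_add x
      have h2 : HasDerivAt (fun t : ℝ => x - t • y) (-y) t := by
        simpa using ((hasDerivAt_id t).smul_const y).const_sub x
      have h3 := ((hdiff (x + t • y)).hasFDerivAt).comp_hasDerivAt t h1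
      have h4 := ((hdiff (x - t • y)).hasFDerivAt).comp_hasDerivAt t h2
      have h5 := h3.add h4
      simp only [Function.comp_def, map_neg] at h5
      convert h5 using 1
      · rfl
      · rfl
      · rfl
      · simp only [hφ', sub_eq_add_neg]
    have hb : ∀ t ∈ Set.Icc (0:ℝ) 1, ‖φ' t‖ ≤ 2 * M * ‖y‖ ^ 2 := by
      intro t ht
      obtain ⟨hm1, hm2⟩ := hmem t ht
      have h5 : ‖fderiv ℝ u₀ (x + t • y) - fderiv ℝ u₀ (x - t • y)‖
          ≤ M * ‖(x + t • y) - (x - t • y)‖ := hlip _ hm1 _ hm2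
      have h6 : (x + t • y) - (x - t • y) = (2 * t) • y := by
        have : (2 * t) • y = t • y + t • y := by rw [two_mul, add_smul]
        rw [this]; abel
      rw [h6] at h5
      have h7 : ‖(2 * t) • y‖ = 2 * t * ‖y‖ := by
        rw [norm_smul, Real.norm_eq_abs, abs_of_nonneg (by linarith [ht.1])]
      rw [h7] at h5
      calc ‖φ' t‖ = ‖(fderiv ℝ u₀ (x + t • y) - fderiv ℝ u₀ (x - t • y)) y‖ := by
            simp [hφ', ContinuousLinearMap.sub_apply]
        _ ≤ ‖fderiv ℝ u₀ (x + t • y) - fderiv ℝ u₀ (x - t • y)‖ * ‖y‖ :=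
            ContinuousLinearMap.le_opNorm _ y
        _ ≤ (M * (2 * t * ‖y‖)) * ‖y‖ := mul_le_mul_of_nonneg_right h5 (norm_nonneg y)
        _ ≤ 2 * M * ‖y‖ ^ 2 := by
            have h9 : 0 ≤ M * (‖y‖ * ‖y‖) := by positivity
            nlinarith [ht.1, ht.2]
    have hmvt := Convex.norm_image_sub_le_of_norm_hasDerivWithin_le
      (f := φ) (f' := φ') (C := 2 * M * ‖y‖ ^ 2)
      (fun t _ => (hderiv t).hasDerivWithinAt) hb (convex_Icc 0 1)
      (Set.left_mem_Icc.mpr zero_le_one) (Set.right_mem_Icc.mpr zero_le_one)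
    have h8 : φ 1 - φ 0 = sd u₀ x y := by
      simp only [hφ, one_smul, zero_smul, add_zero, sub_zero, sd]
      ring
    rw [h8] at hmvt
    simpa using hmvt
  -- the radial dominating function
  set G : ℝ → ℝ := fun r =>
    if r ≤ R then 2 * M * r ^ 2 / r ^ ((n:ℝ) + σ) else 4 / r ^ ((n:ℝ) + σ) with hG
  have hGmeas : Measurable G := by
    apply Measurable.ite (measurableSet_le measurable_id measurable_const)
    · fun_prop
    · fun_prop
  -- pointwise domination
  have hdom : ∀ y : EuclideanSpace ℝ (Fin n), |sd u₀ x y| / ‖y‖ ^ ((n:ℝ) + σ) ≤ G ‖y‖ := by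
    intro y
    by_cases hy : ‖y‖ ≤ R
    · rcases eq_or_lt_of_le (norm_nonneg y) with h0 | h0
      · have hy0 : y = 0 := by rw [← norm_eq_zero]; exact h0.symm
        have hsd0 : sd u₀ x y = 0 := by simp [hy0, sd]; ring
        rw [hsd0, hy0]
        simp [hG, hR0.le]
      · rw [hG]
        simp only [if_pos hy]
        exact div_le_div₀ (by positivity) (key y hy) (Real.rpow_pos_of_pos h0 _) le_rfl
    · have h0 : (0:ℝ) < ‖y‖ := lt_of_lt_of_le hR0 (le_of_not_ge hy)
      have h4 : |sd u₀ x y| ≤ 4 := by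
        have b1 := hpos (x + y); have b2 := hbd (x + y)
        have b3 := hpos (x - y); have b4 := hbd (x - y)
        have b5 := hpos x; have b6 := hbd x
        simp only [sd, abs_le]
        constructor <;> nlinarith
      rw [hG]
      simp only [if_neg hy]
      exact div_le_div₀ (by norm_num) h4 (Real.rpow_pos_of_pos h0 _) le_rfl
  -- 1D profile facts
  have hcast : ((n - 1 : ℕ) : ℝ) = (n : ℝ) - 1 := by
    rw [Nat.cast_sub hn, Nat.cast_one]
  have heq1 : Set.EqOn (fun r : ℝ => 2 * M * r ^ (1 - σ))
      (fun r : ℝ => r ^ (n - 1) * G r) (Set.Ioc 0 R) := by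
    intro r hr
    have h0 : (0:ℝ) < r := hr.1
    simp only [hG, if_pos hr.2]
    have e1 : (r:ℝ) ^ ((n:ℕ) - 1) = r ^ ((n:ℝ) - 1) := by
      rw [← Real.rpow_natCast r (n - 1), hcast]
    have e2 : (r:ℝ) ^ (2:ℕ) = r ^ ((2:ℝ)) := by
      rw [← Real.rpow_natCast r 2]; norm_num
    have e3 : r ^ ((n:ℝ) - 1) * r ^ ((2:ℝ)) / r ^ ((n:ℝ) + σ) = r ^ (1 - σ) := by
      rw [← Real.rpow_add h0, ← Real.rpow_sub h0]
      congr 1; ring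
    rw [e1, e2]
    calc 2 * M * r ^ (1 - σ)
        = 2 * M * (r ^ ((n:ℝ) - 1) * r ^ ((2:ℝ)) / r ^ ((n:ℝ) + σ)) := by rw [e3]
      _ = r ^ ((n:ℝ) - 1) * (2 * M * r ^ ((2:ℝ)) / r ^ ((n:ℝ) + σ)) := by ring
  have heq2 : Set.EqOn (fun r : ℝ => 4 * r ^ (-1 - σ))
      (fun r : ℝ => r ^ (n - 1) * G r) (Set.Ioi R) := by
    intro r hr
    have h0 : (0:ℝ) < r := lt_trans hR0 hr
    simp only [hG, if_neg (not_le.mpr (Set.mem_Ioi.mp hr))]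
    have e1 : (r:ℝ) ^ ((n:ℕ) - 1) = r ^ ((n:ℝ) - 1) := by
      rw [← Real.rpow_natCast r (n - 1), hcast]
    have e3 : r ^ ((n:ℝ) - 1) / r ^ ((n:ℝ) + σ) = r ^ (-1 - σ) := by
      rw [← Real.rpow_sub h0]
      congr 1; ring
    rw [e1]
    calc 4 * r ^ (-1 - σ)
        = 4 * (r ^ ((n:ℝ) - 1) / r ^ ((n:ℝ) + σ)) := by rw [e3]
      _ = r ^ ((n:ℝ) - 1) * (4 / r ^ ((n:ℝ) + σ)) := by ring
  have hnice1 : IntegrableOn (fun r : ℝ => 2 * M * r ^ (1 - σ)) (Set.Ioc 0 R) :=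
    ((intervalIntegral.intervalIntegrable_rpow' (by linarith : (-1:ℝ) < 1 - σ)).1).const_mul _
  have hnice2 : IntegrableOn (fun r : ℝ => 4 * r ^ (-1 - σ)) (Set.Ioi R) :=
    (integrableOn_Ioi_rpow_of_lt (by linarith : -1 - σ < -1) hR0).const_mul _
  have hint1 : IntegrableOn (fun r : ℝ => r ^ (n - 1) * G r) (Set.Ioc 0 R) :=
    hnice1.congr_fun heq1 measurableSet_Ioc
  have hint2 : IntegrableOn (fun r : ℝ => r ^ (n - 1) * G r) (Set.Ioi R) :=
    hnice2.congr_fun heq2 measurableSet_Ioi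
  have hsplit : Set.Ioi (0:ℝ) = Set.Ioc 0 R ∪ Set.Ioi R := (Set.Ioc_union_Ioi_eq_Ioi hR0.le).symm
  have hdisj : Disjoint (Set.Ioc (0:ℝ) R) (Set.Ioi R) := by
    rw [Set.disjoint_left]
    rintro r ⟨_, h1⟩ h2
    exact absurd h1 (not_le.mpr h2)
  have hint : IntegrableOn (fun r : ℝ => r ^ (n - 1) * G r) (Set.Ioi 0) := by
    rw [hsplit]; exact hint1.union hint2
  -- integrability of the dominating function
  have hGint : Integrable (fun y : EuclideanSpace ℝ (Fin n) => G ‖y‖) := by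
    apply integrable_of_radial_profile volume hGmeas
    rwa [hdim]
  -- 1D integral values
  have hI1 : ∫ r in Set.Ioc (0:ℝ) R, 2 * M * r ^ (1 - σ) = 2 * M * (R ^ (2 - σ) / (2 - σ)) := by
    rw [← intervalIntegral.integral_of_le hR0.le, intervalIntegral.integral_const_mul,
      integral_rpow (Or.inl (by linarith : (-1:ℝ) < 1 - σ))]
    rw [Real.zero_rpow (by linarith : 1 - σ + 1 ≠ 0), sub_zero]
    have : 1 - σ + 1 = 2 - σ := by ring
    rw [this]
  have hI2 : ∫ r in Set.Ioi R, 4 * r ^ (-1 - σ) = 4 * (R ^ (-σ) / σ) := by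
    rw [integral_const_mul, integral_Ioi_rpow_of_lt (by linarith : -1 - σ < -1) hR0]
    have e1 : -1 - σ + 1 = -σ := by ring
    rw [e1, neg_div_neg_eq]
  -- value of the full integral
  have hval : ∫ y : EuclideanSpace ℝ (Fin n), G ‖y‖
      = n * (vol * (2 * M * (R ^ (2 - σ) / (2 - σ)) + 4 * (R ^ (-σ) / σ))) := by
    rw [integral_fun_norm_addHaar volume G, hdim]
    have h1d : ∫ r in Set.Ioi (0:ℝ), r ^ (n - 1) • G r
        = 2 * M * (R ^ (2 - σ) / (2 - σ)) + 4 * (R ^ (-σ) / σ) := by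
      simp only [smul_eq_mul]
      rw [hsplit, setIntegral_union hdisj measurableSet_Ioi hint1 hint2,
        setIntegral_congr_fun measurableSet_Ioc heq1.symm,
        setIntegral_congr_fun measurableSet_Ioi heq2.symm, hI1, hI2]
    rw [h1d, nsmul_eq_mul, smul_eq_mul]; rfl
  -- comparison
  have hmono : ∫ y, |sd u₀ x y| / ‖y‖ ^ ((n : ℝ) + σ) ≤ ∫ y : EuclideanSpace ℝ (Fin n), G ‖y‖ :=
    integral_mono_of_nonneg
      (ae_of_all _ fun y => div_nonneg (abs_nonneg _) (Real.rpow_nonneg (norm_nonneg _) _))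
      hGint (ae_of_all _ hdom)
  -- final arithmetic
  have hRσ : R ^ (-σ) = 2 ^ σ * ‖x‖ ^ (-σ) := by
    rw [hRdef, Real.div_rpow (norm_nonneg x) (by norm_num : (0:ℝ) ≤ 2),
      Real.rpow_neg (by norm_num : (0:ℝ) ≤ 2), div_inv_eq_mul, mul_comm]
  have hMR : M * R ^ (2 - σ) = C₀ * R ^ (-p - σ) := by
    rw [hM, mul_assoc, ← Real.rpow_add hR0]
    have : -p - 2 + (2 - σ) = -p - σ := by ring
    rw [this]
  have hRp : R ^ (-p - σ) ≤ R ^ (-σ) :=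
    Real.rpow_le_rpow_of_exponent_le hR1 (by linarith)
  have hxσ : (0:ℝ) ≤ ‖x‖ ^ (-σ) := Real.rpow_nonneg (norm_nonneg x) _
  have h2 : 2 * M * (R ^ (2 - σ) / (2 - σ)) ≤ 2 * C₀ / (2 - σ) * R ^ (-σ) := by
    have e : 2 * M * (R ^ (2 - σ) / (2 - σ)) = 2 * (M * R ^ (2 - σ)) / (2 - σ) := by ring
    rw [e, hMR]
    calc 2 * (C₀ * R ^ (-p - σ)) / (2 - σ) ≤ 2 * (C₀ * R ^ (-σ)) / (2 - σ) := by gcongr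
      _ = 2 * C₀ / (2 - σ) * R ^ (-σ) := by ring
  have h3 : 4 * (R ^ (-σ) / σ) = 4 / σ * R ^ (-σ) := by ring
  calc ∫ y, |sd u₀ x y| / ‖y‖ ^ ((n : ℝ) + σ)
      ≤ ∫ y : EuclideanSpace ℝ (Fin n), G ‖y‖ := hmono
    _ = n * (vol * (2 * M * (R ^ (2 - σ) / (2 - σ)) + 4 * (R ^ (-σ) / σ))) := hval
    _ ≤ n * (vol * (2 * C₀ / (2 - σ) * R ^ (-σ) + 4 / σ * R ^ (-σ))) := by
        apply mul_le_mul_of_nonneg_left _ (Nat.cast_nonneg n)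
        apply mul_le_mul_of_nonneg_left _ hvol0
        rw [h3] at *
        linarith [h2]
    _ = K * ‖x‖ ^ (-σ) := by rw [hK, hRσ]; ring
    _ ≤ (K + 1) * ‖x‖ ^ (-σ) := by nlinarith [hxσ]
end
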